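/- With the standing setup, regard the time-weighted LP trajectory metric as a function of the switching parameter: write d̄_γ(X, Y) for the infimum of the objective c(X, Y, W^{1:T}) (with switching penalty γ) over sequences of matrices satisfying the relaxed assignment constraints. Then for any fixed indexed families of trajectories X and Y, d̄_γ(X, Y) tends to d^0(X, Y) as γ tends to 0 from above, where d^0(X, Y) = ( Σ_{k=1}^{T} w1(k) · GOSPA_k(X, Y)^p )^(1/p) is the p-th root of the weighted sum over time of the GOSPA costs to the p-th power. -/

import Mathlib

open Finset

noncomputable section

/-- The GOSPA base distance on `Option E`. -/
def dG {E : Type*} [MetricSpace E] (c p : ℝ) : Option E → Option E → ℝ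
  | some x, some y => min c (dist x y)
  | none, none => 0
  | _, _ => c / 2 ^ (1 / p)

/-- Relaxed assignment constraints for a soft-assignment matrix. -/
def Relaxed {m n : ℕ} (W : Matrix (Fin (m + 1)) (Fin (n + 1)) ℝ) : Prop :=
  (∀ i j, 0 ≤ W i j) ∧
  (∀ j : Fin n, ∑ i, W i j.castSucc = 1) ∧
  (∀ i : Fin m, ∑ j, W i.castSucc j = 1) ∧
  W (Fin.last m) (Fin.last n) = 0

/-- A matrix is binary if every entry is `0` or `1`. -/
def IsBinary {m n : ℕ} (W : Matrix (Fin (m + 1)) (Fin (n + 1)) ℝ) : Prop :=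
  ∀ i j, W i j = 0 ∨ W i j = 1

/-- Extend an indexed family of trajectories with an extra all-`none` trajectory. -/
def extTraj {E : Type*} {T n : ℕ} (X : Fin n → Fin T → Option E) :
    Fin (n + 1) → Fin T → Option E :=
  fun i => if h : (i : ℕ) < n then X ⟨i, h⟩ else fun _ => none

/-- The matrix `D^k_{X,Y}(i,j) = dG(X_i(k), Y_j(k))^p` of localisation costs at time `k`. -/
def Dmat {E : Type*} [MetricSpace E] (c p : ℝ) {T nX nY : ℕ}
    (X : Fin nX → Fin T → Option E) (Y : Fin nY → Fin T → Option E) (k : Fin T) :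
    Matrix (Fin (nX + 1)) (Fin (nY + 1)) ℝ :=
  fun i j => dG c p (extTraj X i k) (extTraj Y j k) ^ p

/-- The objective of the time-weighted LP trajectory metric for a sequence of
soft-assignment matrices `W`. -/
def obj {E : Type*} [MetricSpace E] (c p γ : ℝ) (w1 w2 : ℕ → ℝ) {T nX nY : ℕ}
    (X : Fin nX → Fin T → Option E) (Y : Fin nY → Fin T → Option E)
    (W : Fin T → Matrix (Fin (nX + 1)) (Fin (nY + 1)) ℝ) : ℝ :=
  (∑ k : Fin T, w1 k.1 * ∑ i, ∑ j, Dmat c p X Y k i j * W k i j +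
      γ ^ p / 2 * ∑ k : Fin (T - 1), w2 k.1 *
        ∑ i : Fin nX, ∑ j : Fin nY,
          |W ⟨k.1, by have := k.2; omega⟩ i.castSucc j.castSucc -
            W ⟨k.1 + 1, by have := k.2; omega⟩ i.castSucc j.castSucc|) ^ (1 / p)

/-- The time-weighted LP trajectory metric: infimum of the objective over all sequences of
matrices satisfying the relaxed assignment constraints. -/
def dbar {E : Type*} [MetricSpace E] (c p γ : ℝ) (w1 w2 : ℕ → ℝ) {T nX nY : ℕ}
    (X : Fin nX → Fin T → Option E) (Y : Fin nY → Fin T → Option E) : ℝ :=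
  ⨅ W : {W : Fin T → Matrix (Fin (nX + 1)) (Fin (nY + 1)) ℝ // ∀ k, Relaxed (W k)},
    obj c p γ w1 w2 X Y W.1

/-- The time-weighted multi-dimensional assignment metric: infimum of the objective over all
sequences of binary matrices satisfying the relaxed assignment constraints. -/
def dmd {E : Type*} [MetricSpace E] (c p γ : ℝ) (w1 w2 : ℕ → ℝ) {T nX nY : ℕ}
    (X : Fin nX → Fin T → Option E) (Y : Fin nY → Fin T → Option E) : ℝ :=
  ⨅ W : {W : Fin T → Matrix (Fin (nX + 1)) (Fin (nY + 1)) ℝ //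
      ∀ k, Relaxed (W k) ∧ IsBinary (W k)},
    obj c p γ w1 w2 X Y W.1

/-- Distance between the states of two present targets (junk value `0` otherwise). -/
def optDist {E : Type*} [MetricSpace E] : Option E → Option E → ℝ
  | some x, some y => dist x y
  | _, _ => 0

/-- A valid GOSPA assignment set at time `k`: a set of pairs of indices of targets that
exist at time `k`, in which every index appears at most once. -/
def ValidTheta {E : Type*} {T nX nY : ℕ} (X : Fin nX → Fin T → Option E)
    (Y : Fin nY → Fin T → Option E) (k : Fin T) (θ : Finset (Fin nX × Fin nY)) : Prop :=
  (∀ q ∈ θ, X q.1 k ≠ none ∧ Y q.2 k ≠ none) ∧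
  (∀ q ∈ θ, ∀ q' ∈ θ, (q.1 = q'.1 ∨ q.2 = q'.2) → q = q')

/-- `|τ^k(X)|`: the number of targets present at time `k`. -/
def tauCard {E : Type*} {T n : ℕ} (X : Fin n → Fin T → Option E) (k : Fin T) : ℕ :=
  (Finset.univ.filter (fun i => (X i k).isSome)).card

/-- The GOSPA cost (to the `p`-th power) at time step `k`. -/
def gospaP {E : Type*} [MetricSpace E] (c p : ℝ) {T nX nY : ℕ}
    (X : Fin nX → Fin T → Option E) (Y : Fin nY → Fin T → Option E) (k : Fin T) : ℝ :=
  sInf {r | ∃ θ : Finset (Fin nX × Fin nY), ValidTheta X Y k θ ∧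
    r = ∑ q ∈ θ, optDist (X q.1 k) (Y q.2 k) ^ p +
      c ^ p / 2 * ((tauCard X k : ℝ) + (tauCard Y k : ℝ) - 2 * (θ.card : ℝ))}

/-- `d^0`: the `p`-th root of the time-weighted sum of the GOSPA costs to the `p`-th power. -/
def d0 {E : Type*} [MetricSpace E] (c p : ℝ) (w1 : ℕ → ℝ) {T nX nY : ℕ}
    (X : Fin nX → Fin T → Option E) (Y : Fin nY → Fin T → Option E) : ℝ :=
  (∑ k : Fin T, w1 k.1 * gospaP c p X Y k) ^ (1 / p)

/-!
At `γ = 0` the objective decouples over time, and at each time the relaxed assignment LP has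
value exactly `GOSPA_k^p`. An optimal GOSPA assignment gives a binary feasible matrix of no
larger cost. Conversely, a relaxed matrix extends, with unchanged cost, to a doubly stochastic
matrix on `Fin nX ⊕ Fin nY` (dummy rows and columns standing for "unassigned"); by Birkhoff's
theorem its cost is an average of costs of permutations, and dual potentials show that a
permutation costs at least the GOSPA cost of the assignment it induces. Hence `d⁰ ≤ d̄_γ ≤ c(X, Y, W*)` for a minimiser `W*` at `γ = 0`, and the right-hand side
tends to `d⁰` because the objective is continuous in `γ`.
-/

open Matrix

theorem Fin.sum_sum_castSucc_last {M : Type*} [AddCommMonoid M] {m n : ℕ}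
    (f : Fin (m + 1) → Fin (n + 1) → M) :
    ∑ i, ∑ j, f i j = ∑ i : Fin m, ∑ j : Fin n, f i.castSucc j.castSucc +
      ∑ i : Fin m, f i.castSucc (Fin.last n) + ∑ j : Fin n, f (Fin.last m) j.castSucc +
      f (Fin.last m) (Fin.last n) := by
  simp only [Fin.sum_univ_castSucc, sum_add_distrib]
  abel

theorem Matrix.exists_nonneg_sum_row_sum_col {ι κ : Type*} [Fintype ι] [Fintype κ]
    {r : ι → ℝ} {s : κ → ℝ} (hr : ∀ a, 0 ≤ r a) (hs : ∀ b, 0 ≤ s b)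
    (h : ∑ a, r a = ∑ b, s b) :
    ∃ F : Matrix ι κ ℝ, (∀ a b, 0 ≤ F a b) ∧ (∀ a, ∑ b, F a b = r a) ∧
      ∀ b, ∑ a, F a b = s b := by
  by_cases hS : ∑ b, s b = 0
  · refine ⟨0, fun _ _ => le_rfl, fun a => ?_, fun b => ?_⟩
    · simp [(sum_eq_zero_iff_of_nonneg fun a _ => hr a).1 (h.trans hS) a (mem_univ a)]
    · simp [(sum_eq_zero_iff_of_nonneg fun b _ => hs b).1 hS b (mem_univ b)]
  · refine ⟨of fun a b => r a * s b / ∑ b, s b, fun a b => ?_, fun a => ?_, fun b => ?_⟩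
    · exact div_nonneg (mul_nonneg (hr a) (hs b)) (sum_nonneg fun b _ => hs b)
    · simp only [of_apply, ← sum_div, ← mul_sum, mul_div_assoc, div_self hS, mul_one]
    · simp only [of_apply, ← sum_div, ← sum_mul, h, mul_div_right_comm, div_self hS, one_mul]

theorem le_sum_mul_of_mem_doublyStochastic {n : Type*} [Fintype n] [DecidableEq n]
    (C : Matrix n n ℝ) {g : ℝ} (hg : ∀ σ : Equiv.Perm n, g ≤ ∑ a, C a (σ a))
    {M : Matrix n n ℝ} (hM : M ∈ doublyStochastic ℝ n) :
    g ≤ ∑ a, ∑ b, C a b * M a b := by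
  have hlin : IsLinearMap ℝ fun M : Matrix n n ℝ => ∑ a, ∑ b, C a b * M a b :=
    ⟨fun M N => by simp only [Matrix.add_apply, mul_add, sum_add_distrib],
      fun t M => by simp only [Matrix.smul_apply, smul_eq_mul, mul_sum, mul_left_comm]⟩
  rw [← SetLike.mem_coe, doublyStochastic_eq_convexHull_permMatrix] at hM
  refine convexHull_min ?_ (convex_halfSpace_ge hlin g) hM
  rintro _ ⟨σ, rfl⟩
  simpa [Equiv.Perm.permMatrix, PEquiv.toMatrix_apply, Equiv.toPEquiv_apply] using hg σ

theorem Finset.sum_ite_mul_ite_not_mem {ι : Type*} [Fintype ι] [DecidableEq ι] (P : ι → Prop)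
    [DecidablePred P] (s : Finset ι) (a : ℝ) :
    ∑ i, (if P i then a else 0) * (if i ∉ s then 1 else 0) = a * #(({i | P i} : Finset ι) \ s) := by
  simp only [mul_ite, mul_one, mul_zero, ← ite_and]
  rw [← sum_filter, sum_const, nsmul_eq_mul, mul_comm]
  congr 3
  ext i
  simp [and_comm]

section GospaBaseDistance

variable {E : Type*} [MetricSpace E] {c p : ℝ}

theorem div_two_rpow_one_div_rpow (hc : 0 ≤ c) (hp : p ≠ 0) :
    (c / 2 ^ (1 / p)) ^ p = c ^ p / 2 := by
  rw [Real.div_rpow hc (by positivity), ← Real.rpow_mul zero_le_two, one_div_mul_cancel hp,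
    Real.rpow_one]

theorem dG_rpow_none_right (hc : 0 ≤ c) (hp : p ≠ 0) (a : Option E) :
    dG c p a none ^ p = if a.isSome then c ^ p / 2 else 0 := by
  cases a
  · simp [dG, Real.zero_rpow hp]
  · simpa [dG] using div_two_rpow_one_div_rpow hc hp

theorem dG_rpow_none_left (hc : 0 ≤ c) (hp : p ≠ 0) (b : Option E) :
    dG c p none b ^ p = if b.isSome then c ^ p / 2 else 0 := by
  cases b
  · simp [dG, Real.zero_rpow hp]
  · simpa [dG] using div_two_rpow_one_div_rpow hc hp

theorem optDist_nonneg (a b : Option E) : 0 ≤ optDist a b := by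
  cases a <;> cases b <;> simp [optDist, dist_nonneg]

theorem dG_rpow_eq_of_dist_lt (x y : E) (h : dist x y < c) :
    dG c p (some x) (some y) ^ p = optDist (some x) (some y) ^ p := by
  rw [dG, optDist, min_eq_right h.le]

theorem dG_rpow_le_optDist_rpow (hc : 0 ≤ c) (hp : 0 ≤ p) (x y : E) :
    dG c p (some x) (some y) ^ p ≤ optDist (some x) (some y) ^ p :=
  Real.rpow_le_rpow (le_min hc dist_nonneg) (min_le_right _ _) hp

theorem ite_add_ite_le_dG_rpow (hc : 0 ≤ c) (hp : p ≠ 0) (a b : Option E)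
    (h : ¬(a.isSome ∧ b.isSome ∧ optDist a b < c)) :
    ((if a.isSome then c ^ p / 2 else 0) + if b.isSome then c ^ p / 2 else 0) ≤
      dG c p a b ^ p := by
  cases a with
  | none => simp [dG_rpow_none_left hc hp]
  | some x =>
    cases b with
    | none => simp [dG_rpow_none_right hc hp]
    | some y =>
      have hcd : c ≤ dist x y := by simpa [optDist] using h
      simp [dG, min_eq_left hcd]

end GospaBaseDistance

section Assignments

variable {E : Type*} {T nX nY : ℕ}
  (X : Fin nX → Fin T → Option E) (Y : Fin nY → Fin T → Option E) (k : Fin T)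

def unassignedFst (θ : Finset (Fin nX × Fin nY)) : Finset (Fin nX) :=
  ({i | (X i k).isSome} : Finset (Fin nX)) \ θ.image Prod.fst

def unassignedSnd (θ : Finset (Fin nX × Fin nY)) : Finset (Fin nY) :=
  ({j | (Y j k).isSome} : Finset (Fin nY)) \ θ.image Prod.snd

theorem validTheta_empty : ValidTheta X Y k ∅ := ⟨by simp, by simp⟩

variable {X Y k} {θ : Finset (Fin nX × Fin nY)}

theorem card_unassignedFst_add_card (hθ : ValidTheta X Y k θ) :
    #(unassignedFst X k θ) + #θ = tauCard X k := by
  rw [unassignedFst, tauCard,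
    ← card_image_of_injOn fun q hq q' hq' h => hθ.2 q hq q' hq' (Or.inl h)]
  refine card_sdiff_add_card_eq_card (image_subset_iff.2 fun q hq => ?_)
  simpa using Option.ne_none_iff_isSome.1 (hθ.1 q hq).1

theorem card_unassignedSnd_add_card (hθ : ValidTheta X Y k θ) :
    #(unassignedSnd Y k θ) + #θ = tauCard Y k := by
  rw [unassignedSnd, tauCard,
    ← card_image_of_injOn fun q hq q' hq' h => hθ.2 q hq q' hq' (Or.inr h)]
  refine card_sdiff_add_card_eq_card (image_subset_iff.2 fun q hq => ?_)
  simpa using Option.ne_none_iff_isSome.1 (hθ.1 q hq).2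

theorem not_mem_unassignedFst_of_mem {i : Fin nX} {j : Fin nY} (h : (i, j) ∈ θ) :
    i ∉ unassignedFst X k θ := by
  simp only [unassignedFst, mem_sdiff, mem_image, not_and, not_not]
  exact fun _ => ⟨(i, j), h, rfl⟩

theorem not_mem_unassignedSnd_of_mem {i : Fin nX} {j : Fin nY} (h : (i, j) ∈ θ) :
    j ∉ unassignedSnd Y k θ := by
  simp only [unassignedSnd, mem_sdiff, mem_image, not_and, not_not]
  exact fun _ => ⟨(i, j), h, rfl⟩

end Assignments

section Gospa

variable {E : Type*} [MetricSpace E] {T nX nY : ℕ}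
  (X : Fin nX → Fin T → Option E) (Y : Fin nY → Fin T → Option E) (k : Fin T)

def gospaCost (c p : ℝ) (θ : Finset (Fin nX × Fin nY)) : ℝ :=
  ∑ q ∈ θ, optDist (X q.1 k) (Y q.2 k) ^ p +
    c ^ p / 2 * ((tauCard X k : ℝ) + (tauCard Y k : ℝ) - 2 * (θ.card : ℝ))

theorem finite_gospaCost (c p : ℝ) :
    {r | ∃ θ, ValidTheta X Y k θ ∧ r = gospaCost X Y k c p θ}.Finite :=
  (Set.finite_range (gospaCost X Y k c p)).subset fun _ ⟨θ, _, hr⟩ => ⟨θ, hr.symm⟩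

theorem exists_gospaP_eq_gospaCost (c p : ℝ) :
    ∃ θ, ValidTheta X Y k θ ∧ gospaP c p X Y k = gospaCost X Y k c p θ :=
  Set.Nonempty.csInf_mem (s := {r | ∃ θ, ValidTheta X Y k θ ∧ r = gospaCost X Y k c p θ})
    ⟨_, ∅, validTheta_empty X Y k, rfl⟩ (finite_gospaCost X Y k c p)

variable {X Y k} {θ : Finset (Fin nX × Fin nY)}

theorem gospaP_le_gospaCost (c p : ℝ) (hθ : ValidTheta X Y k θ) :
    gospaP c p X Y k ≤ gospaCost X Y k c p θ :=
  csInf_le (finite_gospaCost X Y k c p).bddBelow ⟨θ, hθ, rfl⟩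

theorem gospaCost_eq (c p : ℝ) (hθ : ValidTheta X Y k θ) :
    gospaCost X Y k c p θ = ∑ q ∈ θ, optDist (X q.1 k) (Y q.2 k) ^ p +
      c ^ p / 2 * #(unassignedFst X k θ) + c ^ p / 2 * #(unassignedSnd Y k θ) := by
  rw [gospaCost, ← card_unassignedFst_add_card hθ, ← card_unassignedSnd_add_card hθ]
  push_cast
  ring

theorem gospaCost_nonneg {c : ℝ} (p : ℝ) (hc : 0 ≤ c) (hθ : ValidTheta X Y k θ) :
    0 ≤ gospaCost X Y k c p θ := by
  rw [gospaCost_eq c p hθ]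
  have := sum_nonneg fun q (_ : q ∈ θ) => Real.rpow_nonneg (optDist_nonneg (X q.1 k) (Y q.2 k)) p
  positivity

variable (X Y k)

theorem gospaP_nonneg {c : ℝ} (p : ℝ) (hc : 0 ≤ c) : 0 ≤ gospaP c p X Y k := by
  obtain ⟨θ, hθ, h⟩ := exists_gospaP_eq_gospaCost X Y k c p
  exact h ▸ gospaCost_nonneg p hc hθ

end Gospa

section BlockExtension

variable {m n : ℕ}

/-- Rows are the `m` points of the first family followed by `n` dummies, columns are `m` dummies
followed by the `n` points of the second family; a point sent to a dummy is left unassigned. -/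
def costMatrix (D : Matrix (Fin (m + 1)) (Fin (n + 1)) ℝ) :
    Matrix (Fin m ⊕ Fin n) (Fin m ⊕ Fin n) ℝ :=
  fromBlocks (of fun i _ => D i.castSucc (Fin.last n)) (of fun i j => D i.castSucc j.castSucc) 0
    (of fun _ j => D (Fin.last m) j.castSucc)

def blockExtension (W : Matrix (Fin (m + 1)) (Fin (n + 1)) ℝ) (F : Matrix (Fin n) (Fin m) ℝ) :
    Matrix (Fin m ⊕ Fin n) (Fin m ⊕ Fin n) ℝ :=
  fromBlocks (diagonal fun i => W i.castSucc (Fin.last n)) (of fun i j => W i.castSucc j.castSucc)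
    F (diagonal fun j => W (Fin.last m) j.castSucc)

theorem sum_costMatrix_mul_blockExtension (D W : Matrix (Fin (m + 1)) (Fin (n + 1)) ℝ)
    (F : Matrix (Fin n) (Fin m) ℝ) (hW : W (Fin.last m) (Fin.last n) = 0) :
    ∑ a, ∑ b, costMatrix D a b * blockExtension W F a b = ∑ i, ∑ j, D i j * W i j := by
  rw [Fin.sum_sum_castSucc_last fun i j => D i j * W i j, hW, mul_zero, add_zero]
  simp [costMatrix, blockExtension, Fintype.sum_sum_type, diagonal_apply, sum_add_distrib]
  ring

theorem blockExtension_mem_doublyStochastic {W : Matrix (Fin (m + 1)) (Fin (n + 1)) ℝ}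
    (hW : Relaxed W) {F : Matrix (Fin n) (Fin m) ℝ} (hF : ∀ j i, 0 ≤ F j i)
    (hFrow : ∀ j, ∑ i, F j i = ∑ i : Fin m, W i.castSucc j.castSucc)
    (hFcol : ∀ i, ∑ j, F j i = ∑ j : Fin n, W i.castSucc j.castSucc) :
    blockExtension W F ∈ doublyStochastic ℝ (Fin m ⊕ Fin n) := by
  obtain ⟨hnn, hcol, hrow, -⟩ := hW
  rw [mem_doublyStochastic_iff_sum]
  refine ⟨?_, ?_, ?_⟩
  · rintro (i | j) (i' | j') <;> simp only [blockExtension, fromBlocks_apply₁₁, fromBlocks_apply₁₂,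
      fromBlocks_apply₂₁, fromBlocks_apply₂₂, diagonal_apply, of_apply]
    exacts [ite_nonneg (hnn _ _) le_rfl, hnn _ _, hF _ _, ite_nonneg (hnn _ _) le_rfl]
  · rintro (i | j) <;> simp [blockExtension, Fintype.sum_sum_type, diagonal_apply, hFrow]
    · simpa [Fin.sum_univ_castSucc, add_comm] using hrow i
    · simpa [Fin.sum_univ_castSucc] using hcol j
  · rintro (i | j) <;> simp [blockExtension, Fintype.sum_sum_type, diagonal_apply, hFcol]
    · simpa [Fin.sum_univ_castSucc, add_comm] using hrow i
    · simpa [Fin.sum_univ_castSucc] using hcol j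

theorem Relaxed.exists_blockExtension_mem_doublyStochastic
    {W : Matrix (Fin (m + 1)) (Fin (n + 1)) ℝ} (hW : Relaxed W) :
    ∃ F, blockExtension W F ∈ doublyStochastic ℝ (Fin m ⊕ Fin n) := by
  have hnn (i : Fin m) (j : Fin n) : 0 ≤ W i.castSucc j.castSucc := hW.1 _ _
  obtain ⟨F, hF, hFrow, hFcol⟩ := exists_nonneg_sum_row_sum_col
    (r := fun j => ∑ i : Fin m, W i.castSucc j.castSucc)
    (s := fun i => ∑ j : Fin n, W i.castSucc j.castSucc)
    (fun j => sum_nonneg fun i _ => hnn i j) (fun i => sum_nonneg fun j _ => hnn i j) sum_comm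
  exact ⟨F, blockExtension_mem_doublyStochastic hW hF hFrow hFcol⟩

end BlockExtension

section PermutationAssignment

open Sum

variable {E : Type*} [MetricSpace E] {T nX nY : ℕ} (c p : ℝ)
  (X : Fin nX → Fin T → Option E) (Y : Fin nY → Fin T → Option E) (k : Fin T)

@[simp]
theorem Dmat_castSucc_castSucc (i : Fin nX) (j : Fin nY) :
    Dmat c p X Y k i.castSucc j.castSucc = dG c p (X i k) (Y j k) ^ p := by
  simp [Dmat, extTraj]

@[simp]
theorem Dmat_castSucc_last (i : Fin nX) :
    Dmat c p X Y k i.castSucc (Fin.last nY) = dG c p (X i k) none ^ p := by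
  simp [Dmat, extTraj]

@[simp]
theorem Dmat_last_castSucc (j : Fin nY) :
    Dmat c p X Y k (Fin.last nX) j.castSucc = dG c p none (Y j k) ^ p := by
  simp [Dmat, extTraj]

def permAssignment (σ : Equiv.Perm (Fin nX ⊕ Fin nY)) : Finset (Fin nX × Fin nY) :=
  {q | σ (inl q.1) = inr q.2 ∧ (X q.1 k).isSome ∧ (Y q.2 k).isSome ∧
    optDist (X q.1 k) (Y q.2 k) < c}

/-- With `colPotential`, dual potentials for the assignment problem along a permutation, of total
value the GOSPA cost of `θ`. -/
def rowPotential (θ : Finset (Fin nX × Fin nY)) : Fin nX ⊕ Fin nY → ℝ :=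
  Sum.elim (fun i => ∑ q ∈ θ with q.1 = i, optDist (X q.1 k) (Y q.2 k) ^ p +
    if i ∈ unassignedFst X k θ then c ^ p / 2 else 0) 0

def colPotential (θ : Finset (Fin nX × Fin nY)) : Fin nX ⊕ Fin nY → ℝ :=
  Sum.elim 0 fun j => if j ∈ unassignedSnd Y k θ then c ^ p / 2 else 0

variable {c p X Y k}

theorem sum_rowPotential_add_sum_colPotential {θ : Finset (Fin nX × Fin nY)}
    (hθ : ValidTheta X Y k θ) :
    ∑ s, rowPotential c p X Y k θ s + ∑ s, colPotential c p Y k θ s =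
      gospaCost X Y k c p θ := by
  rw [gospaCost_eq c p hθ]
  simp [rowPotential, colPotential, Fintype.sum_sum_type, sum_add_distrib, sum_fiberwise,
    mul_comm]

theorem mem_permAssignment {σ : Equiv.Perm (Fin nX ⊕ Fin nY)} {q : Fin nX × Fin nY} :
    q ∈ permAssignment c X Y k σ ↔ σ (inl q.1) = inr q.2 ∧ (X q.1 k).isSome ∧
      (Y q.2 k).isSome ∧ optDist (X q.1 k) (Y q.2 k) < c := by
  simp [permAssignment]

theorem validTheta_permAssignment (σ : Equiv.Perm (Fin nX ⊕ Fin nY)) :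
    ValidTheta X Y k (permAssignment c X Y k σ) := by
  refine ⟨fun q hq => ?_, fun q hq q' hq' h => ?_⟩
  · obtain ⟨-, hx, hy, -⟩ := mem_permAssignment.1 hq
    exact ⟨Option.ne_none_iff_isSome.2 hx, Option.ne_none_iff_isSome.2 hy⟩
  · have hσ := (mem_permAssignment.1 hq).1
    have hσ' := (mem_permAssignment.1 hq').1
    rcases h with h | h
    · exact Prod.ext h (inr_injective (by rw [← hσ, ← hσ', h]))
    · exact Prod.ext (inl_injective (σ.injective (by rw [hσ, hσ', h]))) h

end PermutationAssignment

section DualPotentials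

open Sum

variable {E : Type*} {T nX nY : ℕ} {X : Fin nX → Fin T → Option E}
  {Y : Fin nY → Fin T → Option E} {k : Fin T}

theorem ite_mem_unassignedFst_le {θ : Finset (Fin nX × Fin nY)} {a : ℝ} (ha : 0 ≤ a)
    (i : Fin nX) :
    (if i ∈ unassignedFst X k θ then a else 0) ≤ if (X i k).isSome then a else 0 := by
  split_ifs <;> simp_all [unassignedFst]

theorem ite_mem_unassignedSnd_le {θ : Finset (Fin nX × Fin nY)} {a : ℝ} (ha : 0 ≤ a)
    (j : Fin nY) :
    (if j ∈ unassignedSnd Y k θ then a else 0) ≤ if (Y j k).isSome then a else 0 := by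
  split_ifs <;> simp_all [unassignedSnd]

variable [MetricSpace E] {c p : ℝ} {σ : Equiv.Perm (Fin nX ⊕ Fin nY)} {i : Fin nX}

theorem sum_filter_fst_permAssignment_of_inl {i' : Fin nX} (hσ : σ (inl i) = inl i')
    (f : Fin nX × Fin nY → ℝ) : ∑ q ∈ permAssignment c X Y k σ with q.1 = i, f q = 0 :=
  sum_eq_zero fun q hq => by
    have := (mem_permAssignment.1 (mem_filter.1 hq).1).1
    rw [(mem_filter.1 hq).2, hσ] at this
    exact absurd this inl_ne_inr

theorem sum_filter_fst_permAssignment_of_inr {j : Fin nY} (hσ : σ (inl i) = inr j)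
    (f : Fin nX × Fin nY → ℝ) : ∑ q ∈ permAssignment c X Y k σ with q.1 = i, f q =
      if (i, j) ∈ permAssignment c X Y k σ then f (i, j) else 0 := by
  have hfib {q} (hq : q ∈ {q ∈ permAssignment c X Y k σ | q.1 = i}) : q = (i, j) :=
    Prod.ext (mem_filter.1 hq).2 <| inr_injective <| by
      rw [← (mem_permAssignment.1 (mem_filter.1 hq).1).1, (mem_filter.1 hq).2, hσ]
  split_ifs with hij
  · exact sum_eq_single_of_mem (i, j) (mem_filter.2 ⟨hij, rfl⟩) fun q hq hne => absurd (hfib hq) hne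
  · exact sum_eq_zero fun q hq => absurd (hfib hq ▸ (mem_filter.1 hq).1) hij

theorem rowPotential_add_colPotential_le (hc : 0 ≤ c) (hp : p ≠ 0) (s : Fin nX ⊕ Fin nY) :
    rowPotential c p X Y k (permAssignment c X Y k σ) s +
        colPotential c p Y k (permAssignment c X Y k σ) (σ s) ≤
      costMatrix (Dmat c p X Y k) s (σ s) := by
  have hc2 : 0 ≤ c ^ p / 2 := by positivity
  rcases s with i | j'
  · cases hσ : σ (inl i) with
    | inl i' =>
      simpa [rowPotential, colPotential, costMatrix, sum_filter_fst_permAssignment_of_inl hσ,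
        dG_rpow_none_right hc hp] using ite_mem_unassignedFst_le hc2 i
    | inr j =>
      by_cases hij : (i, j) ∈ permAssignment c X Y k σ
      · obtain ⟨-, hx, hy, hd⟩ := mem_permAssignment.1 hij
        obtain ⟨x, hx⟩ := Option.isSome_iff_exists.1 hx
        obtain ⟨y, hy⟩ := Option.isSome_iff_exists.1 hy
        rw [hx, hy] at hd
        simp [rowPotential, colPotential, costMatrix, sum_filter_fst_permAssignment_of_inr hσ,
          hij, not_mem_unassignedFst_of_mem hij, not_mem_unassignedSnd_of_mem hij, hx, hy,
          dG_rpow_eq_of_dist_lt x y (by simpa [optDist] using hd)]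
      · have hfar := ite_add_ite_le_dG_rpow hc hp (X i k) (Y j k)
          fun h => hij (mem_permAssignment.2 ⟨hσ, h⟩)
        simp only [rowPotential, colPotential, costMatrix, Sum.elim_inl, Sum.elim_inr,
          sum_filter_fst_permAssignment_of_inr hσ, hij, if_false, zero_add,
          fromBlocks_apply₁₂, of_apply, Dmat_castSucc_castSucc]
        linarith [ite_mem_unassignedFst_le (X := X) (k := k) (θ := permAssignment c X Y k σ) hc2 i,
          ite_mem_unassignedSnd_le (Y := Y) (k := k) (θ := permAssignment c X Y k σ) hc2 j]
  · cases hσ : σ (inr j') with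
    | inl i' => simp [rowPotential, colPotential, costMatrix]
    | inr j =>
      simpa [rowPotential, colPotential, costMatrix, dG_rpow_none_left hc hp] using
        ite_mem_unassignedSnd_le hc2 j

end DualPotentials

section LowerBound

variable {E : Type*} [MetricSpace E] {T nX nY : ℕ} {c p : ℝ}
  (X : Fin nX → Fin T → Option E) (Y : Fin nY → Fin T → Option E) (k : Fin T)

theorem gospaP_le_sum_costMatrix_perm (hc : 0 ≤ c) (hp : p ≠ 0)
    (σ : Equiv.Perm (Fin nX ⊕ Fin nY)) :
    gospaP c p X Y k ≤ ∑ s, costMatrix (Dmat c p X Y k) s (σ s) := by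
  have hθ := validTheta_permAssignment (c := c) (X := X) (Y := Y) (k := k) σ
  calc gospaP c p X Y k ≤ gospaCost X Y k c p (permAssignment c X Y k σ) :=
        gospaP_le_gospaCost c p hθ
    _ = ∑ s, (rowPotential c p X Y k (permAssignment c X Y k σ) s +
          colPotential c p Y k (permAssignment c X Y k σ) (σ s)) := by
        rw [sum_add_distrib, Equiv.sum_comp σ, sum_rowPotential_add_sum_colPotential hθ]
    _ ≤ _ := sum_le_sum fun s _ => rowPotential_add_colPotential_le hc hp s

theorem gospaP_le_sum_Dmat_mul (hc : 0 ≤ c) (hp : p ≠ 0)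
    {W : Matrix (Fin (nX + 1)) (Fin (nY + 1)) ℝ} (hW : Relaxed W) :
    gospaP c p X Y k ≤ ∑ i, ∑ j, Dmat c p X Y k i j * W i j := by
  obtain ⟨F, hF⟩ := hW.exists_blockExtension_mem_doublyStochastic
  rw [← sum_costMatrix_mul_blockExtension _ W F hW.2.2.2]
  exact le_sum_mul_of_mem_doublyStochastic _ (gospaP_le_sum_costMatrix_perm X Y k hc hp) hF

end LowerBound

section AssignMatrix

variable {m n : ℕ}

def assignMatrix (θ : Finset (Fin m × Fin n)) : Matrix (Fin (m + 1)) (Fin (n + 1)) ℝ :=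
  fun i j => Fin.lastCases
    (Fin.lastCases 0 (fun j => if j ∉ θ.image Prod.snd then 1 else 0) j)
    (fun i => Fin.lastCases (if i ∉ θ.image Prod.fst then 1 else 0)
      (fun j => if (i, j) ∈ θ then 1 else 0) j) i

variable (θ : Finset (Fin m × Fin n))

@[simp]
theorem assignMatrix_castSucc_castSucc (i : Fin m) (j : Fin n) :
    assignMatrix θ i.castSucc j.castSucc = if (i, j) ∈ θ then 1 else 0 := by
  simp [assignMatrix]

@[simp]
theorem assignMatrix_castSucc_last (i : Fin m) :
    assignMatrix θ i.castSucc (Fin.last n) = if i ∉ θ.image Prod.fst then 1 else 0 := by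
  simp [assignMatrix]

@[simp]
theorem assignMatrix_last_castSucc (j : Fin n) :
    assignMatrix θ (Fin.last m) j.castSucc = if j ∉ θ.image Prod.snd then 1 else 0 := by
  simp [assignMatrix]

@[simp]
theorem assignMatrix_last_last : assignMatrix θ (Fin.last m) (Fin.last n) = 0 := by
  simp [assignMatrix]

variable {θ}

theorem relaxed_assignMatrix (hθ : ∀ q ∈ θ, ∀ q' ∈ θ, (q.1 = q'.1 ∨ q.2 = q'.2) → q = q') :
    Relaxed (assignMatrix θ) := by
  refine ⟨?_, fun j => ?_, fun i => ?_, assignMatrix_last_last θ⟩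
  · refine Fin.lastCases (Fin.lastCases ?_ fun j => ?_) fun i => Fin.lastCases ?_ fun j => ?_ <;>
      simp only [assignMatrix_castSucc_castSucc, assignMatrix_castSucc_last,
        assignMatrix_last_castSucc, assignMatrix_last_last] <;> positivity
  · rw [Fin.sum_univ_castSucc]
    simp only [assignMatrix_castSucc_castSucc, assignMatrix_last_castSucc]
    by_cases hj : j ∈ θ.image Prod.snd
    · obtain ⟨q, hq, rfl⟩ := mem_image.1 hj
      rw [sum_eq_single_of_mem q.1 (mem_univ _) fun i' _ hi' => if_neg fun h =>
        hi' (congrArg Prod.fst (hθ (i', q.2) h q hq (Or.inr rfl)))]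
      simp [hq, hj]
    · simp_all
  · rw [Fin.sum_univ_castSucc]
    simp only [assignMatrix_castSucc_castSucc, assignMatrix_castSucc_last]
    by_cases hi : i ∈ θ.image Prod.fst
    · obtain ⟨q, hq, rfl⟩ := mem_image.1 hi
      rw [sum_eq_single_of_mem q.2 (mem_univ _) fun j' _ hj' => if_neg fun h =>
        hj' (congrArg Prod.snd (hθ (q.1, j') h q hq (Or.inl rfl)))]
      simp [hq, hi]
    · simp_all

end AssignMatrix

section UpperBound

variable {E : Type*} [MetricSpace E] {T nX nY : ℕ} {c p : ℝ}
  {X : Fin nX → Fin T → Option E} {Y : Fin nY → Fin T → Option E} {k : Fin T}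

theorem sum_Dmat_mul_assignMatrix_le (hc : 0 ≤ c) (hp : 0 < p) {θ : Finset (Fin nX × Fin nY)}
    (hθ : ValidTheta X Y k θ) :
    ∑ i, ∑ j, Dmat c p X Y k i j * assignMatrix θ i j ≤ gospaCost X Y k c p θ := by
  have hmatched : ∑ i : Fin nX, ∑ j : Fin nY, dG c p (X i k) (Y j k) ^ p *
      (if (i, j) ∈ θ then 1 else 0) ≤ ∑ q ∈ θ, optDist (X q.1 k) (Y q.2 k) ^ p := by
    simp only [mul_ite, mul_one, mul_zero]
    rw [← Fintype.sum_prod_type'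
      (f := fun i j => if (i, j) ∈ θ then dG c p (X i k) (Y j k) ^ p else 0), Fintype.sum_ite_mem]
    refine sum_le_sum fun q hq => ?_
    obtain ⟨x, hx⟩ := Option.ne_none_iff_exists'.1 (hθ.1 q hq).1
    obtain ⟨y, hy⟩ := Option.ne_none_iff_exists'.1 (hθ.1 q hq).2
    rw [hx, hy]
    exact dG_rpow_le_optDist_rpow hc hp.le x y
  rw [Fin.sum_sum_castSucc_last, gospaCost_eq c p hθ]
  simp only [Dmat_castSucc_castSucc, Dmat_castSucc_last, Dmat_last_castSucc,
    assignMatrix_castSucc_castSucc, assignMatrix_castSucc_last, assignMatrix_last_castSucc,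
    assignMatrix_last_last, mul_zero, add_zero, dG_rpow_none_right hc hp.ne',
    dG_rpow_none_left hc hp.ne']
  have hX : ∑ i, (if (X i k).isSome then c ^ p / 2 else 0) *
      (if i ∉ θ.image Prod.fst then 1 else 0) = c ^ p / 2 * #(unassignedFst X k θ) :=
    sum_ite_mul_ite_not_mem _ _ _
  have hY : ∑ j, (if (Y j k).isSome then c ^ p / 2 else 0) *
      (if j ∉ θ.image Prod.snd then 1 else 0) = c ^ p / 2 * #(unassignedSnd Y k θ) :=
    sum_ite_mul_ite_not_mem _ _ _
  linarith

end UpperBound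

section Objective

variable {E : Type*} [MetricSpace E] {T nX nY : ℕ} {c p : ℝ} {w1 w2 : ℕ → ℝ}
  {X : Fin nX → Fin T → Option E} {Y : Fin nY → Fin T → Option E}

theorem exists_relaxed_sum_Dmat_mul_eq_gospaP (hc : 0 ≤ c) (hp : 0 < p) (k : Fin T) :
    ∃ W, Relaxed W ∧ ∑ i, ∑ j, Dmat c p X Y k i j * W i j = gospaP c p X Y k := by
  obtain ⟨θ, hθ, hopt⟩ := exists_gospaP_eq_gospaCost X Y k c p
  have hW := relaxed_assignMatrix hθ.2
  exact ⟨assignMatrix θ, hW, le_antisymm ((sum_Dmat_mul_assignMatrix_le hc hp hθ).trans hopt.ge)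
    (gospaP_le_sum_Dmat_mul X Y k hc hp.ne' hW)⟩

theorem exists_obj_zero_eq_d0 (hc : 0 ≤ c) (hp : 0 < p) :
    ∃ W, (∀ k, Relaxed (W k)) ∧ obj c p 0 w1 w2 X Y W = d0 c p w1 X Y := by
  choose W hW hcost using exists_relaxed_sum_Dmat_mul_eq_gospaP (X := X) (Y := Y) hc hp
  exact ⟨W, hW, by simp [obj, d0, hcost, Real.zero_rpow hp.ne']⟩

theorem continuous_obj (hp : 0 < p) (W : Fin T → Matrix (Fin (nX + 1)) (Fin (nY + 1)) ℝ) :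
    Continuous fun γ => obj c p γ w1 w2 X Y W :=
  (Real.continuous_rpow_const (by positivity)).comp
    (continuous_const.add (((Real.continuous_rpow_const hp.le).div_const 2).mul continuous_const))

theorem d0_le_obj (hc : 0 ≤ c) (hp : 0 < p) (hw1 : ∀ k < T, 0 ≤ w1 k)
    (hw2 : ∀ k < T - 1, 0 ≤ w2 k) {γ : ℝ} (hγ : 0 ≤ γ)
    {W : Fin T → Matrix (Fin (nX + 1)) (Fin (nY + 1)) ℝ} (hW : ∀ k, Relaxed (W k)) :
    d0 c p w1 X Y ≤ obj c p γ w1 w2 X Y W := by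
  refine Real.rpow_le_rpow
    (sum_nonneg fun k _ => mul_nonneg (hw1 k k.2) (gospaP_nonneg X Y k p hc)) ?_ (by positivity)
  refine le_add_of_le_of_nonneg (sum_le_sum fun k _ => mul_le_mul_of_nonneg_left
    (gospaP_le_sum_Dmat_mul X Y k hc hp.ne' (hW k)) (hw1 k k.2)) ?_
  exact mul_nonneg (by positivity) (sum_nonneg fun k _ => mul_nonneg (hw2 k k.2)
    (sum_nonneg fun _ _ => sum_nonneg fun _ _ => abs_nonneg _))

theorem dbar_le_obj (hc : 0 ≤ c) (hp : 0 < p) (hw1 : ∀ k < T, 0 ≤ w1 k)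
    (hw2 : ∀ k < T - 1, 0 ≤ w2 k) {γ : ℝ} (hγ : 0 ≤ γ)
    {W : Fin T → Matrix (Fin (nX + 1)) (Fin (nY + 1)) ℝ} (hW : ∀ k, Relaxed (W k)) :
    dbar c p γ w1 w2 X Y ≤ obj c p γ w1 w2 X Y W := by
  refine ciInf_le (f := fun W : {W // ∀ k, Relaxed (W k)} => obj c p γ w1 w2 X Y W.1)
    ⟨d0 c p w1 X Y, ?_⟩ ⟨W, hW⟩
  rintro _ ⟨W', rfl⟩
  exact d0_le_obj hc hp hw1 hw2 hγ W'.2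

theorem d0_le_dbar (hc : 0 ≤ c) (hp : 0 < p) (hw1 : ∀ k < T, 0 ≤ w1 k)
    (hw2 : ∀ k < T - 1, 0 ≤ w2 k) {γ : ℝ} (hγ : 0 ≤ γ) :
    d0 c p w1 X Y ≤ dbar c p γ w1 w2 X Y := by
  obtain ⟨W, hW, -⟩ := exists_obj_zero_eq_d0 (w1 := w1) (w2 := w2) (X := X) (Y := Y) hc hp
  have : Nonempty {W : Fin T → Matrix (Fin (nX + 1)) (Fin (nY + 1)) ℝ // ∀ k, Relaxed (W k)} :=
    ⟨⟨W, hW⟩⟩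
  exact le_ciInf fun W => d0_le_obj hc hp hw1 hw2 hγ W.2

end Objective

open Filter Topology in
/-- As the switching penalty `γ` tends to `0` from above, the time-weighted LP trajectory
metric tends to `d^0`, the `p`-th root of the time-weighted sum of GOSPA costs to the
`p`-th power. -/
theorem dbar_tendsto_d0 {E : Type*} [MetricSpace E] {T nX nY : ℕ}
    (c p : ℝ) (hc : 0 < c) (hp : 1 ≤ p)
    (w1 w2 : ℕ → ℝ) (hw1 : ∀ k < T, 0 < w1 k) (hw2 : ∀ k < T - 1, 0 < w2 k)
    (X : Fin nX → Fin T → Option E) (Y : Fin nY → Fin T → Option E) :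
    Tendsto (fun γ : ℝ => dbar c p γ w1 w2 X Y) (𝓝[>] 0) (𝓝 (d0 c p w1 X Y)) := by
  have hp0 : 0 < p := by linarith
  have hw1' k hk := (hw1 k hk).le
  have hw2' k hk := (hw2 k hk).le
  obtain ⟨W, hW, hW0⟩ := exists_obj_zero_eq_d0 (w1 := w1) (w2 := w2) (X := X) (Y := Y) hc.le hp0
  have hlim : Tendsto (fun γ => obj c p γ w1 w2 X Y W) (𝓝[>] 0) (𝓝 (d0 c p w1 X Y)) :=
    hW0 ▸ ((continuous_obj hp0 W).tendsto 0).mono_left nhdsWithin_le_nhds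
  refine tendsto_of_tendsto_of_tendsto_of_le_of_le' tendsto_const_nhds hlim ?_ ?_ <;>
    filter_upwards [self_mem_nhdsWithin] with γ hγ
  · exact d0_le_dbar hc.le hp0 hw1' hw2' hγ.le
  · exact dbar_le_obj hc.le hp0 hw1' hw2' hγ.le hW
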